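/- arXiv:2005.03114 — 5 statements merged into one kernel-verified Lean document; each statement's English description precedes it below -/
import Mathlib

section
/- For all complex numbers z, w and every real number κ, the following algebraic identity holds: (κ|z|² + 1)²(κ|w|² + 1)² − (4κ Re(z·conj w) + (κ|z|² − 1)(κ|w|² − 1))² = 4κ |z − w|² (κ²|z|²|w|² + 2κ Re(z·conj w) + 1). -/
/-- The factorization identity used to simplify the potential of the curved
`n`-body problem in stereographic coordinates. -/
theorem curved_potential_factorization (z w : ℂ) (κ : ℝ) :
    (κ * ‖z‖ ^ 2 + 1) ^ 2 * (κ * ‖w‖ ^ 2 + 1) ^ 2 -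
      (4 * κ * (z * (starRingEnd ℂ) w).re +
        (κ * ‖z‖ ^ 2 - 1) * (κ * ‖w‖ ^ 2 - 1)) ^ 2 =
    4 * κ * ‖z - w‖ ^ 2 *
      (κ ^ 2 * ‖z‖ ^ 2 * ‖w‖ ^ 2 +
        2 * κ * (z * (starRingEnd ℂ) w).re + 1) := by
  -- As a difference of squares, the left side factors as `2κ (|z|² + |w|² - 2 Re(z w̄))`
  -- times `2 (κ²|z|²|w|² + 2κ Re(z w̄) + 1)`; the first factor is `2κ |z - w|²`.
  have law_of_cosines : ‖z - w‖ ^ 2 = ‖z‖ ^ 2 + ‖w‖ ^ 2 - 2 * (z * (starRingEnd ℂ) w).re := by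
    simp only [Complex.sq_norm, Complex.normSq_sub]
  rw [law_of_cosines]
  ring
end

section
/- Let κ > 0 and let z, w be complex numbers with z ≠ w. Then (4κ Re(z·conj w) + (κ|w|² − 1)(κ|z|² − 1)) / sqrt( κ⁻¹(κ|w|² + 1)²(κ|z|² + 1)² − κ⁻¹(4κ Re(z·conj w) + (κ|w|² − 1)(κ|z|² − 1))² ) = (4κ Re(z·conj w) + (κ|w|² − 1)(κ|z|² − 1)) / (2|z − w| · sqrt(κ²|z|²|w|² + 2κ Re(z·conj w) + 1)), where sqrt denotes the real square root. In other words, the curved two-body potential of the sphere of curvature κ written with stereographic projection coincides with the unified simplified expression. -/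
open scoped BigOperators

/-- Unified curved pair potential `V(z, w; κ)`. -/
noncomputable def Vpot (z w : ℂ) (κ : ℝ) : ℝ :=
  (4 * κ * (z * (starRingEnd ℂ) w).re +
      (κ * ‖w‖ ^ 2 - 1) * (κ * ‖z‖ ^ 2 - 1)) /
    (2 * ‖z - w‖ *
      Real.sqrt (κ ^ 2 * ‖z‖ ^ 2 * ‖w‖ ^ 2 +
        2 * κ * (z * (starRingEnd ℂ) w).re + 1))

/-!
Stereographic projection from the sphere of curvature `κ` sends `z` to a point whose angle
`θ` with the image of `w` satisfies `(κ|z|² + 1)(κ|w|² + 1) cos θ = 4κ Re(z w̄) + (κ|w|² - 1)(κ|z|² - 1)`.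
The radicand of the potential is `κ⁻¹ ((κ|z|² + 1)(κ|w|² + 1) sin θ)²`, and a Lagrange-type
polynomial identity in `|z|², |w|², Re(z w̄)` factors it as the perfect square `(2|z - w|)²`
times `κ²|z|²|w|² + 2κ Re(z w̄) + 1`.
-/

theorem sq_mul_sq_sub_sq_stereographic (κ a b r : ℝ) :
    (κ * b + 1) ^ 2 * (κ * a + 1) ^ 2 - (4 * κ * r + (κ * b - 1) * (κ * a - 1)) ^ 2 =
      4 * κ * (a + b - 2 * r) * (κ ^ 2 * a * b + 2 * κ * r + 1) := by
  ring

theorem Complex.sq_norm_sub_eq (z w : ℂ) :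
    ‖z - w‖ ^ 2 = ‖z‖ ^ 2 + ‖w‖ ^ 2 - 2 * (z * (starRingEnd ℂ) w).re := by
  simp only [Complex.sq_norm, Complex.normSq_sub]

theorem stereographic_radicand_eq {κ : ℝ} (hκ : κ ≠ 0) (z w : ℂ) :
    κ⁻¹ * (κ * ‖w‖ ^ 2 + 1) ^ 2 * (κ * ‖z‖ ^ 2 + 1) ^ 2 -
        κ⁻¹ * (4 * κ * (z * (starRingEnd ℂ) w).re +
          (κ * ‖w‖ ^ 2 - 1) * (κ * ‖z‖ ^ 2 - 1)) ^ 2 =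
      (2 * ‖z - w‖) ^ 2 *
        (κ ^ 2 * ‖z‖ ^ 2 * ‖w‖ ^ 2 + 2 * κ * (z * (starRingEnd ℂ) w).re + 1) := by
  rw [mul_assoc κ⁻¹, ← mul_sub, sq_mul_sq_sub_sq_stereographic, mul_pow,
    Complex.sq_norm_sub_eq]
  field_simp
  ring

theorem sphere_potential_eq_unified_general (κ : ℝ) (hκ : 0 < κ) (z w : ℂ) :
    (4 * κ * (z * (starRingEnd ℂ) w).re +
        (κ * ‖w‖ ^ 2 - 1) * (κ * ‖z‖ ^ 2 - 1)) /
      Real.sqrt (κ⁻¹ * (κ * ‖w‖ ^ 2 + 1) ^ 2 * (κ * ‖z‖ ^ 2 + 1) ^ 2 -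
        κ⁻¹ * (4 * κ * (z * (starRingEnd ℂ) w).re +
          (κ * ‖w‖ ^ 2 - 1) * (κ * ‖z‖ ^ 2 - 1)) ^ 2) =
    (4 * κ * (z * (starRingEnd ℂ) w).re +
        (κ * ‖w‖ ^ 2 - 1) * (κ * ‖z‖ ^ 2 - 1)) /
      (2 * ‖z - w‖ *
        Real.sqrt (κ ^ 2 * ‖z‖ ^ 2 * ‖w‖ ^ 2 +
          2 * κ * (z * (starRingEnd ℂ) w).re + 1)) := by
  rw [stereographic_radicand_eq hκ.ne', Real.sqrt_mul (sq_nonneg _),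
    Real.sqrt_sq (by positivity)]

/-- For positive curvature `κ`, the curved two-body potential written with the
stereographic projection coincides with the unified simplified expression. -/
theorem sphere_potential_eq_unified (κ : ℝ) (hκ : 0 < κ) (z w : ℂ) (hzw : z ≠ w) :
    (4 * κ * (z * (starRingEnd ℂ) w).re +
        (κ * ‖w‖ ^ 2 - 1) * (κ * ‖z‖ ^ 2 - 1)) /
      Real.sqrt (κ⁻¹ * (κ * ‖w‖ ^ 2 + 1) ^ 2 * (κ * ‖z‖ ^ 2 + 1) ^ 2 -
        κ⁻¹ * (4 * κ * (z * (starRingEnd ℂ) w).re +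
          (κ * ‖w‖ ^ 2 - 1) * (κ * ‖z‖ ^ 2 - 1)) ^ 2) =
    (4 * κ * (z * (starRingEnd ℂ) w).re +
        (κ * ‖w‖ ^ 2 - 1) * (κ * ‖z‖ ^ 2 - 1)) /
      (2 * ‖z - w‖ *
        Real.sqrt (κ ^ 2 * ‖z‖ ^ 2 * ‖w‖ ^ 2 +
          2 * κ * (z * (starRingEnd ℂ) w).re + 1)) :=
  sphere_potential_eq_unified_general κ hκ z w
end

section
/- (Main theorem.) Let n ≥ 2 and m₁, …, mₙ > 0, and let a ∈ ℂⁿ be a non-degenerate central configuration: a has pairwise distinct components, ∇L(a; 0) = 0, and the kernel of the Hessian D²L(a; 0) (the second Fréchet derivative of L(·; 0) at a, a symmetric bilinear form on ℂⁿ ≅ ℝ^{2n}) is exactly the real line spanned by 𝒥a = (i·a₁, …, i·aₙ). Then there exist κ₀ > 0 and a continuous map u : (−κ₀, κ₀) → ℂⁿ with u(0) = a such that for every κ with |κ| < κ₀, u(κ) has pairwise distinct components and ∇L(u(κ); κ) = 0; that is, the relative equilibrium a of the planar Newtonian n-body problem continues to relative equilibria of the n-body problem in spaces of constant curvature κ,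 for both signs of κ. -/
open scoped BigOperators

/-- Conformal factor `λ(z; κ)`. -/
noncomputable def lamConf (z : ℂ) (κ : ℝ) : ℝ := 4 / (1 + κ * ‖z‖ ^ 2) ^ 2

/-- Reduced Lagrangian of the curved `n`-body problem in rotating coordinates. -/
noncomputable def Lag (n : ℕ) (m : Fin n → ℝ) (κ : ℝ) (u : Fin n → ℂ) : ℝ :=
  (1 / 2) * ∑ j, m j * lamConf (u j) κ * ‖u j‖ ^ 2 +
    ∑ j : Fin n, ∑ k ∈ Finset.Ioi j, m j * m k * Vpot (u j) (u k) κ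

/-- Gradient of the reduced Lagrangian with respect to the real inner product
`Re⟪v, w⟫ = ∑ j, Re (v j * conj (w j))` on `ℂⁿ ≅ ℝ^{2n}`: the `j`-th component
is `∂L/∂xⱼ + i ∂L/∂yⱼ`. -/
noncomputable def gradL (n : ℕ) (m : Fin n → ℝ) (κ : ℝ) (u : Fin n → ℂ) : Fin n → ℂ :=
  fun j =>
    ((fderiv ℝ (fun z : ℂ => Lag n m κ (Function.update u j z)) (u j)) 1 : ℝ) +
      ((fderiv ℝ (fun z : ℂ => Lag n m κ (Function.update u j z)) (u j)) Complex.I : ℝ) *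
        Complex.I

/-!
At `κ = 0` the critical point `a` is degenerate in the direction `𝒥a` of the infinitesimal rotation,
so the implicit function theorem does not apply to `∇L` itself. Pick a linear functional `φ` with
`φ (𝒥a) ≠ 0` and solve instead `∇L(u; κ) + φ(u - a) φ = 0`: since the Hessian at `a` is symmetric
with kernel `ℝ 𝒥a`, the added rank-one term makes the linearization in `u` invertible, and the
implicit function theorem yields a continuous branch `u(κ)`. Rotational invariance of `L(·; κ)`
gives `∇L(u; κ)(𝒥u) = 0`, so evaluating the equation at `𝒥u(κ)` forces `φ(u(κ) - a) = 0`,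
i.e. `u(κ)` is a genuine critical point.
-/

open Function Filter Metric Set Module
open scoped Topology ComplexConjugate

section Continuation

variable {𝕜 : Type*} [NontriviallyNormedField 𝕜]
  {E₁ : Type*} [NormedAddCommGroup E₁] [NormedSpace 𝕜 E₁]
  {E₂ : Type*} [NormedAddCommGroup E₂] [NormedSpace 𝕜 E₂]
  {F : Type*} [NormedAddCommGroup F] [NormedSpace 𝕜 F]

theorem injective_add_smulRight_of_ker_eq_span {H : E₂ →L[𝕜] E₂ →L[𝕜] 𝕜}
    (hH : ∀ v w, H v w = H w v) {ξ : E₂} (hker : ∀ v, H v = 0 ↔ ∃ t : 𝕜, v = t • ξ)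
    {φ : E₂ →L[𝕜] 𝕜} (hφ : φ ξ ≠ 0) : Injective (H + φ.smulRight φ) := by
  refine (injective_iff_map_eq_zero _).2 fun v hv => ?_
  have hHξ : H ξ = 0 := (hker ξ).2 ⟨1, (one_smul _ _).symm⟩
  have hφv : φ v = 0 := by
    have := congrArg (· ξ) hv
    simpa [hH v ξ, hHξ, hφ] using this
  obtain ⟨t, rfl⟩ := (hker v).1 (by simpa [hφv] using hv)
  simp [show t = 0 by simpa [hφ] using hφv]

theorem ContinuousLinearMap.isInvertible_of_injective [CompleteSpace 𝕜]
    [FiniteDimensional 𝕜 E₁] [FiniteDimensional 𝕜 E₂] {T : E₁ →L[𝕜] E₂} (hT : Injective T)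
    (hdim : finrank 𝕜 E₁ = finrank 𝕜 E₂) : T.IsInvertible :=
  ⟨(T.toLinearMap.linearEquivOfInjective hT hdim).toContinuousLinearEquiv, rfl⟩

theorem finrank_strongDual [CompleteSpace 𝕜] [FiniteDimensional 𝕜 E₂] :
    finrank 𝕜 (E₂ →L[𝕜] 𝕜) = finrank 𝕜 E₂ :=
  LinearMap.toContinuousLinearMap.finrank_eq.symm.trans Subspace.dual_finrank_eq

namespace HasStrictFDerivAt

variable {u : E₁ × E₂} {f : E₁ × E₂ → F} {f' : E₁ × E₂ →L[𝕜] F}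

theorem eventually_continuousAt_implicitFunctionOfProdDomain [CompleteSpace E₁]
    [CompleteSpace E₂] [CompleteSpace F] (hf : HasStrictFDerivAt f f' u)
    (hf' : (f' ∘L .inr 𝕜 E₁ E₂).IsInvertible) :
    ∀ᶠ x in 𝓝 u.1, ContinuousAt (hf.implicitFunctionOfProdDomain hf') x := by
  set e := (hf.implicitFunctionDataOfProdDomain hf').toOpenPartialHomeomorph
  have hmem : (f u, u.1) ∈ e.target :=
    (hf.implicitFunctionDataOfProdDomain hf').map_pt_mem_toOpenPartialHomeomorph_target
  filter_upwards [(e.open_target.preimage (by fun_prop)).mem_nhds hmem] with x hx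
  exact continuousAt_snd.comp ((e.continuousAt_symm hx).comp (by fun_prop))

theorem exists_continuousOn_ball_apply_eq [CompleteSpace E₁] [CompleteSpace E₂]
    [CompleteSpace F] (hf : HasStrictFDerivAt f f' u)
    (hf' : (f' ∘L .inr 𝕜 E₁ E₂).IsInvertible) {V : Set (E₁ × E₂)} (hV : V ∈ 𝓝 u) :
    ∃ ε > 0, ∃ ψ : E₁ → E₂, ContinuousOn ψ (ball u.1 ε) ∧ ψ u.1 = u.2 ∧
      ∀ x ∈ ball u.1 ε, (x, ψ x) ∈ V ∧ f (x, ψ x) = f u := by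
  set ψ := hf.implicitFunctionOfProdDomain hf'
  have hψu : ψ u.1 = u.2 :=
    (hf.eventually_apply_eq_iff_implicitFunctionOfProdDomain hf').self_of_nhds.1 rfl
  have hψV : ∀ᶠ x in 𝓝 u.1, (x, ψ x) ∈ V :=
    (tendsto_id.prodMk_nhds (hf.tendsto_implicitFunctionOfProdDomain hf')).eventually hV
  obtain ⟨ε, hε, hball⟩ := Metric.eventually_nhds_iff_ball.1
    ((hf.eventually_continuousAt_implicitFunctionOfProdDomain hf').and
      (hψV.and (hf.eventually_apply_implicitFunctionOfProdDomain hf')))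
  exact ⟨ε, hε, ψ, fun x hx => (hball x hx).1.continuousWithinAt, hψu,
    fun x hx => (hball x hx).2⟩

end HasStrictFDerivAt

theorem ContDiffAt.fderiv_curry_right {f : E₁ → E₂ → F} {p : E₁ × E₂} {m : ℕ}
    (hf : ContDiffAt 𝕜 (m + 1) ↿f p) :
    ContDiffAt 𝕜 m (fun q : E₁ × E₂ => fderiv 𝕜 (f q.1) q.2) p := by
  have hpartial : ∀ᶠ q in 𝓝 p, fderiv 𝕜 (f q.1) q.2 = fderiv 𝕜 ↿f q ∘L .inr 𝕜 E₁ E₂ := by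
    filter_upwards [hf.eventually (by simp)] with q hq
    exact ((hq.differentiableAt (by simp)).hasFDerivAt.comp q.2
      (hasFDerivAt_prodMk_right (𝕜 := 𝕜) q.1 q.2)).fderiv
  exact ((hf.fderiv_right le_rfl).clm_comp contDiffAt_const).congr_of_eventuallyEq hpartial

end Continuation

section

variable {P : Type*} [NormedAddCommGroup P] [NormedSpace ℝ P] [CompleteSpace P]
  {E : Type*} [NormedAddCommGroup E] [NormedSpace ℝ E] [FiniteDimensional ℝ E]

theorem exists_continuousOn_ball_fderiv_eq_zero {f : P → E → ℝ} {U : Set (P × E)}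
    {X : E → E} {x₀ : P} {a : E} (hU : IsOpen U) (haU : (x₀, a) ∈ U)
    (hf : ContDiffOn ℝ 2 ↿f U) (hX : ContinuousAt X a) (hXa : X a ≠ 0)
    (hinv : ∀ p ∈ U, fderiv ℝ (f p.1) p.2 (X p.2) = 0)
    (hcrit : fderiv ℝ (f x₀) a = 0)
    (hnondeg : ∀ v, fderiv ℝ (fderiv ℝ (f x₀)) a v = 0 ↔ ∃ t : ℝ, v = t • X a) :
    ∃ ε > 0, ∃ u : P → E, ContinuousOn u (ball x₀ ε) ∧ u x₀ = a ∧
      ∀ x ∈ ball x₀ ε, (x, u x) ∈ U ∧ fderiv ℝ (f x) (u x) = 0 := by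
  obtain ⟨φ, hφ⟩ := SeparatingDual.exists_ne_zero (R := ℝ) hXa
  have hf₀ : ContDiffAt ℝ 2 ↿f (x₀, a) := hf.contDiffAt (hU.mem_nhds haU)
  set D : P × E → E →L[ℝ] ℝ := fun q => fderiv ℝ (f q.1) q.2
  have hD : HasStrictFDerivAt D (fderiv ℝ D (x₀, a)) (x₀, a) :=
    (hf₀.fderiv_curry_right (m := 1)).hasStrictFDerivAt one_ne_zero
  set H := fderiv ℝ (fderiv ℝ (f x₀)) a
  have hHess : fderiv ℝ D (x₀, a) ∘L .inr ℝ P E = H :=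
    ((hD.hasFDerivAt.comp a (hasFDerivAt_prodMk_right (𝕜 := ℝ) x₀ a)).fderiv).symm
  have hsymm : ∀ v w, H v w = H w v :=
    (hf₀.comp a (contDiffAt_const.prodMk contDiffAt_id)).isSymmSndFDerivAt (by simp)
  set G : P × E → E →L[ℝ] ℝ := fun q => D q + φ.smulRight φ (q.2 - a)
  set G' := fderiv ℝ D (x₀, a) + φ.smulRight φ ∘L .snd ℝ P E
  have hG : HasStrictFDerivAt G G' (x₀, a) :=
    hD.add ((φ.smulRight φ).hasStrictFDerivAt.comp _ (hasStrictFDerivAt_snd.sub_const a))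
  have hG' : (G' ∘L .inr ℝ P E).IsInvertible := by
    refine ContinuousLinearMap.isInvertible_of_injective ?_ finrank_strongDual.symm
    have : G' ∘L .inr ℝ P E = H + φ.smulRight φ := by
      simp only [G', ContinuousLinearMap.add_comp, hHess, ContinuousLinearMap.comp_assoc,
        ContinuousLinearMap.snd_comp_inr, ContinuousLinearMap.comp_id]
    rw [this]
    exact injective_add_smulRight_of_ker_eq_span hsymm hnondeg hφ
  have hV : U ∩ {q | φ (X q.2) ≠ 0} ∈ 𝓝 (x₀, a) :=
    inter_mem (hU.mem_nhds haU)
      ((φ.continuous.continuousAt.comp (hX.comp continuousAt_snd)).eventually_ne hφ)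
  obtain ⟨ε, hε, u, hu, hu₀, hball⟩ := hG.exists_continuousOn_ball_apply_eq hG' hV
  refine ⟨ε, hε, u, hu, hu₀, fun x hx => ?_⟩
  obtain ⟨⟨hxU, hφX : φ (X (u x)) ≠ 0⟩, hGx⟩ := hball x hx
  have hGx' : fderiv ℝ (f x) (u x) + φ.smulRight φ (u x - a) = 0 := by
    simpa [G, D, hcrit] using hGx
  have hc : φ (u x - a) = 0 := by
    simpa [hinv (x, u x) hxU, hφX] using congrArg (· (X (u x))) hGx'
  exact ⟨hxU, by simpa [hc] using hGx'⟩

end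

section CurvedNBody

@[fun_prop]
theorem Complex.contDiff_re {n : WithTop ℕ∞} : ContDiff ℝ n (fun z : ℂ => z.re) :=
  Complex.reCLM.contDiff

@[fun_prop]
theorem Complex.contDiff_im {n : WithTop ℕ∞} : ContDiff ℝ n (fun z : ℂ => z.im) :=
  Complex.imCLM.contDiff

theorem ContinuousLinearMap.eq_zero_iff_forall_single {ι : Type*} [Fintype ι] [DecidableEq ι]
    (B : (ι → ℂ) →L[ℝ] ℝ) :
    B = 0 ↔ ∀ j, B (Pi.single j 1) = 0 ∧ B (Pi.single j Complex.I) = 0 := by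
  refine ⟨fun h => by simp [h], fun h => coe_injective (LinearMap.pi_ext fun j z => ?_)⟩
  have hz : (Pi.single j z : ι → ℂ) =
      z.re • (Pi.single j 1 : ι → ℂ) + z.im • (Pi.single j Complex.I : ι → ℂ) := by
    rw [← Pi.single_smul, ← Pi.single_smul, ← Pi.single_add]
    simp [Complex.real_smul, Complex.re_add_im]
  simp [hz, (h j).1, (h j).2]

variable {E : Type*} [NormedAddCommGroup E] [NormedSpace ℝ E]

-- Mathlib's `ContDiffAt.norm_sq` and `ContDiffAt.norm` take the scalar field explicitly, which
-- `fun_prop` cannot supply.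
@[fun_prop]
theorem ContDiffAt.norm_sq_complex {n : WithTop ℕ∞} {f : E → ℂ} {x : E}
    (hf : ContDiffAt ℝ n f x) : ContDiffAt ℝ n (fun y => ‖f y‖ ^ 2) x :=
  hf.norm_sq ℝ

@[fun_prop]
theorem ContDiffAt.norm_complex {n : WithTop ℕ∞} {f : E → ℂ} {x : E}
    (hf : ContDiffAt ℝ n f x) (h : f x ≠ 0) : ContDiffAt ℝ n (fun y => ‖f y‖) x :=
  hf.norm ℝ h

theorem ContDiffAt.Vpot {n : WithTop ℕ∞} {f g : E → ℂ} {κ : E → ℝ} {x : E}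
    (hf : ContDiffAt ℝ n f x) (hg : ContDiffAt ℝ n g x) (hκ : ContDiffAt ℝ n κ x)
    (hfg : f x ≠ g x)
    (hpos : 0 < κ x ^ 2 * ‖f x‖ ^ 2 * ‖g x‖ ^ 2 + 2 * κ x * (f x * conj (g x)).re + 1) :
    ContDiffAt ℝ n (fun y => Vpot (f y) (g y) (κ y)) x := by
  have hfg' : f x - g x ≠ 0 := sub_ne_zero.2 hfg
  unfold _root_.Vpot
  fun_prop (disch := first | assumption | positivity | exact hpos.ne')

theorem ContDiffAt.lamConf {n : WithTop ℕ∞} {f : E → ℂ} {κ : E → ℝ} {x : E}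
    (hf : ContDiffAt ℝ n f x) (hκ : ContDiffAt ℝ n κ x) (h : 1 + κ x * ‖f x‖ ^ 2 ≠ 0) :
    ContDiffAt ℝ n (fun y => lamConf (f y) (κ y)) x := by
  unfold _root_.lamConf
  fun_prop (disch := first | assumption | positivity)

def regularSet (n : ℕ) : Set (ℝ × (Fin n → ℂ)) :=
  {p | (∀ j k, j ≠ k → p.2 j ≠ p.2 k) ∧ (∀ j, 1 + p.1 * ‖p.2 j‖ ^ 2 ≠ 0) ∧
    ∀ j k, 0 < p.1 ^ 2 * ‖p.2 j‖ ^ 2 * ‖p.2 k‖ ^ 2 + 2 * p.1 * (p.2 j * conj (p.2 k)).re + 1}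

theorem isOpen_regularSet (n : ℕ) : IsOpen (regularSet n) := by
  simp only [regularSet, ofPred_and, ofPred_forall]
  refine .inter ?_ (.inter ?_ ?_) <;>
    refine isOpen_iInter_of_finite fun j => ?_
  · exact isOpen_iInter_of_finite fun k => isOpen_iInter_of_finite fun _ =>
      isOpen_ne_fun (by fun_prop) (by fun_prop)
  · exact isOpen_ne_fun (by fun_prop) (by fun_prop)
  · exact isOpen_iInter_of_finite fun k => isOpen_lt (by fun_prop) (by fun_prop)

theorem zero_mem_regularSet {n : ℕ} {a : Fin n → ℂ} (ha : Injective a) :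
    ((0 : ℝ), a) ∈ regularSet n :=
  ⟨fun _ _ hjk => ha.ne hjk, by simp, by simp⟩

theorem contDiffAt_uncurry_Lag {n : ℕ} (m : Fin n → ℝ) {p : ℝ × (Fin n → ℂ)}
    (hp : p ∈ regularSet n) : ContDiffAt ℝ 2 ↿(Lag n m) p := by
  obtain ⟨hne, hconf, hrad⟩ := hp
  have hκ : ContDiffAt ℝ 2 (fun q : ℝ × (Fin n → ℂ) => q.1) p := contDiffAt_fst
  have hu (j : Fin n) : ContDiffAt ℝ 2 (fun q : ℝ × (Fin n → ℂ) => q.2 j) p := by fun_prop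
  refine (contDiffAt_const.mul (.sum fun j _ => ?_)).add
    (.sum fun j _ => .sum fun k hk => contDiffAt_const.mul ?_)
  · exact (contDiffAt_const.mul ((hu j).lamConf hκ (hconf j))).mul (hu j).norm_sq_complex
  · exact (hu j).Vpot (hu k) hκ (hne j k (Finset.mem_Ioi.1 hk).ne) (hrad j k)

theorem differentiableAt_Lag {n : ℕ} (m : Fin n → ℝ) {p : ℝ × (Fin n → ℂ)}
    (hp : p ∈ regularSet n) : DifferentiableAt ℝ (Lag n m p.1) p.2 :=
  (((contDiffAt_uncurry_Lag m hp).differentiableAt (by simp)).comp p.2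
    (differentiableAt_const p.1 |>.prodMk differentiableAt_id) :
      DifferentiableAt ℝ (↿(Lag n m) ∘ fun w => (p.1, w)) p.2)

theorem Lag_mul_left {n : ℕ} (m : Fin n → ℝ) (κ : ℝ) {c : ℂ} (hc : ‖c‖ = 1) (u : Fin n → ℂ) :
    Lag n m κ (fun j => c * u j) = Lag n m κ u := by
  have hre (z w : ℂ) : (c * z * conj (c * w)).re = (z * conj w).re := by
    rw [map_mul, mul_mul_mul_comm, Complex.mul_conj, Complex.normSq_eq_norm_sq, hc]
    simp
  simp only [Lag, lamConf, Vpot, ← mul_sub, norm_mul, hc, one_mul, hre]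

theorem fderiv_Lag_apply_I_mul {n : ℕ} (m : Fin n → ℝ) {κ : ℝ} {u : Fin n → ℂ}
    (hL : DifferentiableAt ℝ (Lag n m κ) u) :
    fderiv ℝ (Lag n m κ) u (fun j => Complex.I * u j) = 0 := by
  have hrot : HasDerivAt (fun θ : ℝ => fun j => Complex.exp (θ * Complex.I) * u j)
      (fun j => Complex.I * u j) 0 := by
    rw [hasDerivAt_pi]
    intro j
    simpa using
      (((Complex.ofRealCLM.hasDerivAt (x := 0)).mul_const Complex.I).cexp).mul_const (u j)
  have hL' : HasFDerivAt (Lag n m κ) (fderiv ℝ (Lag n m κ) u)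
      (fun j => Complex.exp ((0 : ℝ) * Complex.I) * u j) := by
    simpa using hL.hasFDerivAt
  have hconst := hL'.comp_hasDerivAt (0 : ℝ) hrot
  simp only [comp_def, Lag_mul_left m κ (Complex.norm_exp_ofReal_mul_I _)] at hconst
  exact hconst.unique (hasDerivAt_const _ _)

theorem gradL_eq_zero_iff {n : ℕ} {m : Fin n → ℝ} {κ : ℝ} {u : Fin n → ℂ}
    (hL : DifferentiableAt ℝ (Lag n m κ) u) :
    gradL n m κ u = 0 ↔ fderiv ℝ (Lag n m κ) u = 0 := by
  have hpartial (j : Fin n) (z : ℂ) :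
      fderiv ℝ (fun z => Lag n m κ (update u j z)) (u j) z =
        fderiv ℝ (Lag n m κ) u (Pi.single j z) := by
    have hL' : HasFDerivAt (Lag n m κ) (fderiv ℝ (Lag n m κ) u) (update u j (u j)) := by
      simpa using hL.hasFDerivAt
    rw [show (fun z => Lag n m κ (update u j z)) = Lag n m κ ∘ update u j from rfl,
      (hL'.comp (u j) (hasFDerivAt_update u (u j))).fderiv]
    refine congrArg _ (funext fun i => ?_)
    rcases eq_or_ne i j with rfl | hij <;> simp [*]
  rw [ContinuousLinearMap.eq_zero_iff_forall_single, funext_iff]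
  simp only [gradL, hpartial, Pi.zero_apply, Complex.ext_iff]
  simp

end CurvedNBody

theorem continuation_of_relative_equilibria_general
    (n : ℕ) (hn : 2 ≤ n) (m : Fin n → ℝ)
    (a : Fin n → ℂ) (ha : Function.Injective a)
    (hcrit : gradL n m 0 a = 0)
    (hnondeg : ∀ v : Fin n → ℂ,
      (fderiv ℝ (fun u : Fin n → ℂ => fderiv ℝ (fun w : Fin n → ℂ => Lag n m 0 w) u) a) v = 0 ↔
        ∃ t : ℝ, v = t • fun j => Complex.I * a j) :
    ∃ κ₀ > (0 : ℝ), ∃ u : ℝ → Fin n → ℂ,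
      ContinuousOn u (Set.Ioo (-κ₀) κ₀) ∧ u 0 = a ∧
        ∀ κ : ℝ, |κ| < κ₀ → Function.Injective (u κ) ∧ gradL n m κ (u κ) = 0 := by
  have ha₀ : ((0 : ℝ), a) ∈ regularSet n := zero_mem_regularSet ha
  have hIa : (fun j => Complex.I * a j) ≠ 0 := by
    have h01 : (⟨0, by omega⟩ : Fin n) ≠ ⟨1, by omega⟩ := by simp
    intro h
    have hzero (j : Fin n) : a j = 0 := by simpa using congrFun h j
    exact h01 (ha ((hzero _).trans (hzero _).symm))
  obtain ⟨κ₀, hκ₀, u, hu, hu₀, hcritu⟩ := exists_continuousOn_ball_fderiv_eq_zero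
    (X := fun v j => Complex.I * v j) (isOpen_regularSet n) ha₀
    (fun p hp => (contDiffAt_uncurry_Lag m hp).contDiffWithinAt)
    (continuous_const_smul Complex.I).continuousAt hIa
    (fun p hp => fderiv_Lag_apply_I_mul m (differentiableAt_Lag m hp))
    ((gradL_eq_zero_iff (differentiableAt_Lag m ha₀)).1 hcrit) hnondeg
  refine ⟨κ₀, hκ₀, u, by simpa [Real.ball_eq_Ioo] using hu, hu₀, fun κ hκ => ?_⟩
  obtain ⟨hreg, hcritκ⟩ := hcritu κ (by simpa using hκ)
  exact ⟨fun j k hjk => not_imp_not.1 (hreg.1 j k) hjk,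
    (gradL_eq_zero_iff (differentiableAt_Lag m hreg)).2 hcritκ⟩

/-- **Main theorem.** Every non-degenerate central configuration of the planar
Newtonian `n`-body problem can be continued to relative equilibria of the
`n`-body problem in spaces of constant curvature `κ`, for `|κ|` small, of both
signs. -/
theorem continuation_of_relative_equilibria
    (n : ℕ) (hn : 2 ≤ n) (m : Fin n → ℝ) (hm : ∀ j, 0 < m j)
    (a : Fin n → ℂ) (ha : Function.Injective a)
    (hcrit : gradL n m 0 a = 0)
    (hnondeg : ∀ v : Fin n → ℂ,
      (fderiv ℝ (fun u : Fin n → ℂ => fderiv ℝ (fun w : Fin n → ℂ => Lag n m 0 w) u) a) v = 0 ↔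
        ∃ t : ℝ, v = t • fun j => Complex.I * a j) :
    ∃ κ₀ > (0 : ℝ), ∃ u : ℝ → Fin n → ℂ,
      ContinuousOn u (Set.Ioo (-κ₀) κ₀) ∧ u 0 = a ∧
        ∀ κ : ℝ, |κ| < κ₀ → Function.Injective (u κ) ∧ gradL n m κ (u κ) = 0 :=
  continuation_of_relative_equilibria_general n hn m a ha hcrit hnondeg
end

section
/- Let n ≥ 2 and m₁, …, mₙ > 0, let a ∈ ℂⁿ be a non-degenerate central configuration (pairwise distinct components, ∇L(a; 0) = 0, and the kernel of the Hessian D²L(a; 0) is exactly the real line spanned by 𝒥a = (i·a₁, …, i·aₙ)), and let e ∈ ℂⁿ satisfy Re⟨e, 𝒥a⟩ ≠ 0. Define the augmented map F(u, α; κ) = (∇L(u; κ) + α·𝒥u, Re⟨u − a, e⟩) with values in ℂⁿ × ℝ. Then there exist κ₀ > 0, a neighborhood W of (a, 0) in ℂⁿ × ℝ, and a continuous map κ ↦ (u(κ), α(κ)) on (−κ₀, κ₀) with (u(0), α(0)) = (a, 0) such that for each |κ| < κ₀, (u(κ), α(κ)) is the unique point of W satisfying F(u(κ), α(κ); κ)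 = 0; that is, the augmented map has a unique continuation of solutions starting from (a, 0). -/
open scoped BigOperators

/-- Augmented map `F(u, α; κ) = (∇L(u; κ) + α 𝒥u, Re⟪u − a, e⟫)` used for the
numerical continuation of relative equilibria. -/
noncomputable def Faug (n : ℕ) (m : Fin n → ℝ) (a e : Fin n → ℂ) (κ : ℝ)
    (p : (Fin n → ℂ) × ℝ) : (Fin n → ℂ) × ℝ :=
  (fun j => gradL n m κ p.1 j + (p.2 : ℂ) * (Complex.I * p.1 j),
    ∑ j, ((p.1 j - a j) * (starRingEnd ℂ) (e j)).re)

open Complex ComplexConjugate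

/-!
At `κ = 0` the denominator of `lamConf` and the radicand in `Vpot` equal `1`, and the pair
distances at `a` are positive, so `(κ, u, α) ↦ F(u, α; κ)` is `C¹` near `(0, a, 0)` and the
implicit function theorem applies once the partial Jacobian
`(v, β) ↦ (D²L(a; 0) v + β 𝒥a, Re⟨v, e⟩)` is injective. Pairing the first component with `𝒥a`
and using the symmetry of the Hessian together with `D²L(a; 0) 𝒥a = 0` gives `β |𝒥a|² = 0`, and
`𝒥a ≠ 0` because `Re⟨e, 𝒥a⟩ ≠ 0`. Then `v` lies in `ker D²L(a; 0) = ℝ 𝒥a`, and the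
normalization `Re⟨v, e⟩ = 0` forces `v = 0`.
-/

section Smoothness

variable {E : Type*} [NormedAddCommGroup E] [NormedSpace ℝ E] {k : WithTop ℕ∞}

@[fun_prop]
theorem ContDiff.re_mul_conj {f g : E → ℂ} (hf : ContDiff ℝ k f) (hg : ContDiff ℝ k g) :
    ContDiff ℝ k fun x => (f x * conj (g x)).re :=
  reCLM.contDiff.comp (hf.mul (conjCLE.contDiff.comp hg))

@[fun_prop]
theorem ContDiff.sq_norm_complex {f : E → ℂ} (hf : ContDiff ℝ k f) :
    ContDiff ℝ k fun x => ‖f x‖ ^ 2 :=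
  hf.norm_sq ℂ

theorem contDiffAt_lamConf {κ : ℝ} {z : ℂ} (h : 1 + κ * ‖z‖ ^ 2 ≠ 0) :
    ContDiffAt ℝ k (fun p : ℝ × ℂ => lamConf p.2 p.1) (κ, z) := by
  unfold lamConf
  exact contDiffAt_const.div (ContDiff.contDiffAt (by fun_prop)) (pow_ne_zero 2 h)

theorem contDiffAt_Vpot {κ : ℝ} {z w : ℂ} (hzw : z ≠ w)
    (hQ : 0 < κ ^ 2 * ‖z‖ ^ 2 * ‖w‖ ^ 2 + 2 * κ * (z * conj w).re + 1) :
    ContDiffAt ℝ k (fun p : ℝ × ℂ × ℂ => Vpot p.2.1 p.2.2 p.1) (κ, z, w) := by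
  have hdist : ContDiffAt ℝ k (fun p : ℝ × ℂ × ℂ => ‖p.2.1 - p.2.2‖) (κ, z, w) :=
    ContDiffAt.norm ℝ (ContDiff.contDiffAt (by fun_prop)) (sub_ne_zero.2 hzw)
  have hsqrt : ContDiffAt ℝ k (fun p : ℝ × ℂ × ℂ => √(p.1 ^ 2 * ‖p.2.1‖ ^ 2 * ‖p.2.2‖ ^ 2 +
      2 * p.1 * (p.2.1 * conj p.2.2).re + 1)) (κ, z, w) :=
    ContDiffAt.sqrt (ContDiff.contDiffAt (by fun_prop)) hQ.ne'
  unfold Vpot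
  refine ContDiffAt.div (ContDiff.contDiffAt (by fun_prop))
    ((contDiffAt_const.mul hdist).mul hsqrt) ?_
  have : ‖z - w‖ ≠ 0 := norm_ne_zero_iff.2 (sub_ne_zero.2 hzw)
  have : √(κ ^ 2 * ‖z‖ ^ 2 * ‖w‖ ^ 2 + 2 * κ * (z * conj w).re + 1) ≠ 0 :=
    (Real.sqrt_pos.2 hQ).ne'
  simp_all

def lagDomain (n : ℕ) : Set (ℝ × (Fin n → ℂ)) :=
  {q | (∀ j k, j ≠ k → q.2 j ≠ q.2 k) ∧ (∀ j, 1 + q.1 * ‖q.2 j‖ ^ 2 ≠ 0) ∧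
    ∀ j k, 0 < q.1 ^ 2 * ‖q.2 j‖ ^ 2 * ‖q.2 k‖ ^ 2 + 2 * q.1 * (q.2 j * conj (q.2 k)).re + 1}

theorem isOpen_lagDomain (n : ℕ) : IsOpen (lagDomain n) := by
  simp only [lagDomain, Set.ofPred_and, Set.ofPred_forall]
  refine .inter ?_ (.inter ?_ ?_) <;>
    refine isOpen_iInter_of_finite fun j => ?_
  · exact isOpen_iInter_of_finite fun k => isOpen_iInter_of_finite fun _ =>
      isOpen_ne_fun (by fun_prop) (by fun_prop)
  · exact isOpen_ne_fun (by fun_prop) (by fun_prop)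
  · exact isOpen_iInter_of_finite fun k => isOpen_lt (by fun_prop) (by fun_prop)

theorem mk_zero_mem_lagDomain {n : ℕ} {u : Fin n → ℂ} (hu : Function.Injective u) :
    (0, u) ∈ lagDomain n := by
  simpa [lagDomain] using fun j k => hu.ne

theorem contDiffAt_uncurry_lag {n : ℕ} (m : Fin n → ℝ) {q : ℝ × (Fin n → ℂ)}
    (hq : q ∈ lagDomain n) : ContDiffAt ℝ k (fun q : ℝ × (Fin n → ℂ) => Lag n m q.1 q.2) q := by
  obtain ⟨hne, hden, hQ⟩ := hq
  have hcoord (j : Fin n) : ContDiff ℝ k fun q : ℝ × (Fin n → ℂ) => q.2 j := by fun_prop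
  unfold Lag
  refine (contDiffAt_const.mul (.sum fun j _ => .mul (contDiffAt_const.mul ?_)
    (hcoord j).sq_norm_complex.contDiffAt)).add
    (.sum fun j _ => .sum fun l hl => contDiffAt_const.mul ?_)
  · exact (contDiffAt_lamConf (k := k) (hden j)).comp (g := fun p : ℝ × ℂ => lamConf p.2 p.1) q
      (contDiff_fst.prodMk (hcoord j)).contDiffAt
  · exact (contDiffAt_Vpot (k := k) (hne j l (Finset.mem_Ioi.1 hl).ne) (hQ j l)).comp
      (g := fun p : ℝ × ℂ × ℂ => Vpot p.2.1 p.2.2 p.1) q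
      (contDiff_fst.prodMk ((hcoord j).prodMk (hcoord l))).contDiffAt

end Smoothness

-- Unfolding `Lag` during unification is prohibitively expensive.
attribute [local irreducible] Lag

theorem contDiffAt_lag {n : ℕ} {m : Fin n → ℝ} {κ : ℝ} {k : WithTop ℕ∞} {u : Fin n → ℂ}
    (hq : (κ, u) ∈ lagDomain n) :
    ContDiffAt ℝ k (Lag n m κ) u :=
  (contDiffAt_uncurry_lag m hq).comp u (contDiffAt_const.prodMk contDiffAt_id)

section Gradient

variable {n : ℕ}

/-- `rePair x v = Re⟨v, x⟩`. -/
noncomputable def rePair (x : Fin n → ℂ) : (Fin n → ℂ) →L[ℝ] ℝ :=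
  ∑ j, reCLM ∘L (ContinuousLinearMap.mul ℝ ℂ).flip (conj (x j)) ∘L ContinuousLinearMap.proj j

theorem rePair_apply (x v : Fin n → ℂ) : rePair x v = ∑ j, (v j * conj (x j)).re := by
  simp only [rePair, FunLike.coe_sum, Finset.sum_apply, ContinuousLinearMap.coe_comp,
    Function.comp_apply, ContinuousLinearMap.proj_apply, ContinuousLinearMap.flip_apply,
    ContinuousLinearMap.mul_apply', reCLM_apply]

theorem rePair_comm (x y : Fin n → ℂ) : rePair x y = rePair y x := by
  simp only [rePair_apply]
  exact Finset.sum_congr rfl fun j _ => by simp only [mul_re, conj_re, conj_im]; ring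

theorem rePair_self_pos {x : Fin n → ℂ} (hx : x ≠ 0) : 0 < rePair x x := by
  obtain ⟨j, hj⟩ := Function.ne_iff.1 hx
  simp only [rePair_apply, mul_conj, ofReal_re]
  exact Finset.sum_pos' (fun k _ => normSq_nonneg _) ⟨j, Finset.mem_univ j, normSq_pos.2 hj⟩

variable (n) in
/-- The Riesz representative of a real functional on `ℂⁿ` for `Re⟨·, ·⟩`. -/
noncomputable def gradOf : ((Fin n → ℂ) →L[ℝ] ℝ) →L[ℝ] (Fin n → ℂ) :=
  ContinuousLinearMap.pi fun j =>
    (ContinuousLinearMap.apply ℝ ℝ (Pi.single j 1)).smulRight (1 : ℂ) +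
      (ContinuousLinearMap.apply ℝ ℝ (Pi.single j I)).smulRight I

theorem gradOf_apply (T : (Fin n → ℂ) →L[ℝ] ℝ) (j : Fin n) :
    gradOf n T j = T (Pi.single j 1) + T (Pi.single j I) * I := by
  simp [gradOf, real_smul]

theorem rePair_gradOf (T : (Fin n → ℂ) →L[ℝ] ℝ) (w : Fin n → ℂ) : rePair w (gradOf n T) = T w := by
  have hsingle (j : Fin n) : Pi.single j (w j) =
      (w j).re • Pi.single (M := fun _ => ℂ) j 1 + (w j).im • Pi.single (M := fun _ => ℂ) j I := by
    rw [← Pi.single_smul, ← Pi.single_smul, ← Pi.single_add, real_smul, real_smul, mul_one,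
      re_add_im]
  conv_rhs => rw [← Finset.univ_sum_single w, map_sum]
  simp only [rePair_apply, gradOf_apply, hsingle, map_add, map_smul, smul_eq_mul]
  exact Finset.sum_congr rfl fun j _ => by simp [mul_re]; ring

theorem gradL_eq_gradOf {m : Fin n → ℝ} {κ : ℝ} {u : Fin n → ℂ}
    (hL : DifferentiableAt ℝ (Lag n m κ) u) :
    gradL n m κ u = gradOf n (fderiv ℝ (Lag n m κ) u) := by
  funext j
  have hupd : HasFDerivAt (fun z => Lag n m κ (Function.update u j z)) _ (u j) :=
    (Function.update_eq_self j u ▸ hL.hasFDerivAt).comp (u j) (hasFDerivAt_update u (u j))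
  have hsingle (y : ℂ) :
      (fun i => Pi.single (M := fun _ => ℂ →L[ℝ] ℂ) j (.id ℝ ℂ) i y) = Pi.single j y := by
    ext i; rcases eq_or_ne i j with rfl | h <;> simp [*]
  rw [gradL, hupd.fderiv, gradOf_apply]
  simp [hsingle]

end Gradient

theorem ContinuousLinearMap.isInvertible_of_injective_s13 {𝕜 E : Type*} [NontriviallyNormedField 𝕜]
    [CompleteSpace 𝕜] [NormedAddCommGroup E] [NormedSpace 𝕜 E] [FiniteDimensional 𝕜 E]
    {f : E →L[𝕜] E} (hf : Function.Injective f) : f.IsInvertible :=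
  ⟨(LinearEquiv.ofInjectiveEndo (f : E →ₗ[𝕜] E) hf).toContinuousLinearEquiv, rfl⟩

theorem eq_zero_of_bordered_eq_zero {𝕜 V : Type*} [NontriviallyNormedField 𝕜]
    [NormedAddCommGroup V] [NormedSpace 𝕜 V] {H : V →L[𝕜] V →L[𝕜] 𝕜} (hH : ∀ v w, H v w = H w v)
    {J : V} (hker : ∀ v, H v = 0 ↔ ∃ t : 𝕜, v = t • J) {φ ℓ : V →L[𝕜] 𝕜} (hφ : φ J ≠ 0)
    (hℓ : ℓ J ≠ 0) {v : V} {β : 𝕜} (h : H v + β • φ = 0) (hv : ℓ v = 0) : v = 0 ∧ β = 0 := by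
  have hJ : H J = 0 := (hker J).2 ⟨1, (one_smul _ _).symm⟩
  have hβ : β = 0 := by
    simpa [hH v J, hJ, hφ] using congr($h J)
  obtain ⟨t, rfl⟩ := (hker v).1 (by ext w; simpa [hβ] using congr($h w))
  have ht : t = 0 := by simpa [hℓ] using hv
  simp [ht, hβ]

open Filter Topology in
theorem exists_unique_continuation_of_hasStrictFDerivAt {E F : Type*}
    [NormedAddCommGroup E] [NormedSpace ℝ E] [CompleteSpace E]
    [NormedAddCommGroup F] [NormedSpace ℝ F] [CompleteSpace F]
    {f : ℝ × E → F} {f' : ℝ × E →L[ℝ] F} {x₀ : E} (hf : HasStrictFDerivAt f f' (0, x₀))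
    (hf' : (f' ∘L .inr ℝ ℝ E).IsInvertible) (h0 : f (0, x₀) = 0) :
    ∃ κ₀ > (0 : ℝ), ∃ W ∈ 𝓝 x₀, ∃ φ : ℝ → E, ContinuousOn φ (Set.Ioo (-κ₀) κ₀) ∧ φ 0 = x₀ ∧
      ∀ κ : ℝ, |κ| < κ₀ → φ κ ∈ W ∧ f (κ, φ κ) = 0 ∧ ∀ p ∈ W, f (κ, p) = 0 → p = φ κ := by
  set Φ := (hf.implicitFunctionDataOfProdDomain hf').toOpenPartialHomeomorph
  have hΦ (q : ℝ × E) : Φ q = (f q, q.1) := rfl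
  have hsrc : (0, x₀) ∈ Φ.source := ImplicitFunctionData.pt_mem_toOpenPartialHomeomorph_source _
  have hΦ₀ : Φ (0, x₀) = (0, 0) := by rw [hΦ, h0]
  obtain ⟨U, W, hU, hW, h0U, hx₀W, hUW⟩ := isOpen_prod_iff.1 Φ.open_source 0 x₀ hsrc
  have hS : IsOpen {κ : ℝ | ((0 : F), κ) ∈ Φ.target ∩ Φ.symm ⁻¹' (U ×ˢ W)} :=
    (Φ.isOpen_inter_preimage_symm (hU.prod hW)).preimage (by fun_prop)
  have h0S : ((0 : F), (0 : ℝ)) ∈ Φ.target ∩ Φ.symm ⁻¹' (U ×ˢ W) := by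
    rw [← hΦ₀]
    exact ⟨Φ.map_source hsrc, by rw [Set.mem_preimage, Φ.left_inv hsrc]; exact ⟨h0U, hx₀W⟩⟩
  obtain ⟨κ₀, hκ₀, hball⟩ := Metric.isOpen_iff.1 hS 0 h0S
  have hIoo : Set.Ioo (-κ₀) κ₀ = Metric.ball 0 κ₀ := by simp [Real.ball_eq_Ioo]
  refine ⟨κ₀, hκ₀, W, hW.mem_nhds hx₀W, fun κ => (Φ.symm (0, κ)).2, ?_, ?_, fun κ hκ => ?_⟩
  · rw [hIoo]
    exact continuous_snd.comp_continuousOn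
      (Φ.continuousOn_symm.comp (by fun_prop) fun κ hκ => (hball hκ).1)
  · simp only [← hΦ₀, Φ.left_inv hsrc]
  · obtain ⟨ht, hyUW⟩ := hball (by simpa using hκ)
    set y := Φ.symm (0, κ)
    obtain ⟨hfy, hy₁⟩ : f y = 0 ∧ y.1 = κ := by
      simpa only [hΦ, Prod.mk.injEq] using Φ.right_inv ht
    have hy : y = (κ, y.2) := Prod.ext hy₁ rfl
    refine ⟨hyUW.2, hy ▸ hfy, fun p hp hfp => ?_⟩
    have hκp : (κ, p) ∈ Φ.source := hUW ⟨hy₁ ▸ hyUW.1, hp⟩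
    have := Φ.injOn hκp (Φ.map_target ht) (by rw [hΦ, hΦ, hfp, hfy, hy₁])
    exact congr(Prod.snd $this)

section Augmented

open Filter Topology

variable {n : ℕ} {m : Fin n → ℝ} {a e : Fin n → ℂ} {κ : ℝ} {k : WithTop ℕ∞}

theorem Faug_eq {p : (Fin n → ℂ) × ℝ} (hq : (κ, p.1) ∈ lagDomain n) :
    Faug n m a e κ p =
      (gradOf n (fderiv ℝ (Lag n m κ) p.1) + p.2 • I • p.1, rePair e (p.1 - a)) := by
  rw [Faug, gradL_eq_gradOf ((contDiffAt_lag (k := 1) hq).differentiableAt one_ne_zero),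
    rePair_apply]
  refine Prod.ext (funext fun j => ?_) rfl
  simp [real_smul]

theorem Faug_eventuallyEq {u : Fin n → ℂ} (hq : (κ, u) ∈ lagDomain n) (α : ℝ) :
    (fun q : ℝ × (Fin n → ℂ) × ℝ => Faug n m a e q.1 q.2) =ᶠ[𝓝 (κ, u, α)]
      fun q => (gradOf n (fderiv ℝ (Lag n m q.1) q.2.1) + q.2.2 • I • q.2.1,
        rePair e (q.2.1 - a)) := by
  have hopen : IsOpen {q : ℝ × (Fin n → ℂ) × ℝ | (q.1, q.2.1) ∈ lagDomain n} :=
    (isOpen_lagDomain n).preimage (by fun_prop)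
  filter_upwards [hopen.mem_nhds hq] with q hq using Faug_eq hq

theorem contDiffAt_Faug {u : Fin n → ℂ} (hq : (κ, u) ∈ lagDomain n) (α : ℝ) :
    ContDiffAt ℝ k (fun q : ℝ × (Fin n → ℂ) × ℝ => Faug n m a e q.1 q.2) (κ, u, α) := by
  have hlag : ContDiffAt ℝ (k + 1) (fun p : (ℝ × (Fin n → ℂ) × ℝ) × (Fin n → ℂ) =>
      Lag n m p.1.1 p.2) ((κ, u, α), u) :=
    (contDiffAt_uncurry_lag m hq).comp (g := fun q : ℝ × (Fin n → ℂ) => Lag n m q.1 q.2)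
      ((κ, u, α), u) (contDiff_fst.fst.prodMk contDiff_snd).contDiffAt
  have hgrad : ContDiffAt ℝ k (fun q : ℝ × (Fin n → ℂ) × ℝ => fderiv ℝ (Lag n m q.1) q.2.1)
      (κ, u, α) :=
    ContDiffAt.fderiv (f := fun (q : ℝ × (Fin n → ℂ) × ℝ) (u : Fin n → ℂ) => Lag n m q.1 u)
      (g := fun q => q.2.1) hlag (by fun_prop) le_rfl
  refine ContDiffAt.congr_of_eventuallyEq ?_ (Faug_eventuallyEq hq α)
  exact ((gradOf n).contDiff.contDiffAt.comp _ hgrad |>.add (by fun_prop)).prodMk (by fun_prop)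

open ContinuousLinearMap in
theorem hasFDerivAt_Faug {u : Fin n → ℂ} (hq : (κ, u) ∈ lagDomain n) (α : ℝ) :
    HasFDerivAt (Faug n m a e κ)
      ((gradOf n ∘L fderiv ℝ (fderiv ℝ (Lag n m κ)) u ∘L fst ℝ _ ℝ +
          (α • lsmul ℝ ℂ I ∘L fst ℝ _ ℝ + (snd ℝ (Fin n → ℂ) ℝ).smulRight (I • u))).prod
        (rePair e ∘L fst ℝ _ ℝ)) (u, α) := by
  have hH : HasFDerivAt (fderiv ℝ (Lag n m κ)) (fderiv ℝ (fderiv ℝ (Lag n m κ)) u) u :=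
    ((contDiffAt_lag (k := 2) hq).fderiv_right (m := 1) le_rfl).differentiableAt
      one_ne_zero |>.hasFDerivAt
  have hfst : HasFDerivAt (fun p : (Fin n → ℂ) × ℝ => p.1) (.fst ℝ _ ℝ) (u, α) := hasFDerivAt_fst
  have hsnd : HasFDerivAt (fun p : (Fin n → ℂ) × ℝ => p.2) (.snd ℝ _ ℝ) (u, α) := hasFDerivAt_snd
  have hsmooth := (((gradOf n).hasFDerivAt.comp _ (hH.comp _ hfst)).add
    (hsnd.smul ((lsmul ℝ ℂ I).hasFDerivAt.comp _ hfst))).prodMk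
    ((rePair e).hasFDerivAt.comp _ (hfst.sub_const a))
  have hopen : IsOpen {p : (Fin n → ℂ) × ℝ | (κ, p.1) ∈ lagDomain n} :=
    (isOpen_lagDomain n).preimage (by fun_prop)
  refine hsmooth.congr_of_eventuallyEq ?_
  filter_upwards [hopen.mem_nhds hq] with p hp using Faug_eq hp

theorem isInvertible_fderiv_Faug (ha : Function.Injective a)
    (hnondeg : ∀ v, fderiv ℝ (fderiv ℝ (Lag n m 0)) a v = 0 ↔ ∃ t : ℝ, v = t • fun j => I * a j)
    (he : rePair (fun j => I * a j) e ≠ 0) :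
    (fderiv ℝ (Faug n m a e 0) (a, 0)).IsInvertible := by
  have h0a := mk_zero_mem_lagDomain ha
  set H := fderiv ℝ (fderiv ℝ (Lag n m 0)) a
  set J : Fin n → ℂ := fun j => I * a j
  have hsymm : ∀ v w, H v w = H w v :=
    (contDiffAt_lag (m := m) (k := 2) h0a).isSymmSndFDerivAt (by simp)
  have hJ : J ≠ 0 := fun h => he (by simp [h, rePair_apply])
  rw [(hasFDerivAt_Faug (m := m) (e := e) h0a 0).fderiv]
  refine ContinuousLinearMap.isInvertible_of_injective_s13 ((injective_iff_map_eq_zero _).2 ?_)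
  rintro ⟨v, β⟩ hvβ
  obtain ⟨hgrad, hℓ⟩ : gradOf n (H v) + β • J = 0 ∧ rePair e v = 0 := by
    simp at hvβ; exact hvβ
  have hbordered : H v + β • rePair J = 0 := by
    ext w
    simpa [rePair_gradOf, rePair_comm J w] using congr(rePair w $hgrad)
  obtain ⟨rfl, rfl⟩ := eq_zero_of_bordered_eq_zero hsymm hnondeg (rePair_self_pos hJ).ne'
    (by rwa [rePair_comm]) hbordered hℓ
  rfl

end Augmented

theorem augmented_map_unique_continuation_general
    (n : ℕ) (m : Fin n → ℝ)
    (a : Fin n → ℂ) (ha : Function.Injective a)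
    (hcrit : gradL n m 0 a = 0)
    (hnondeg : ∀ v : Fin n → ℂ,
      (fderiv ℝ (fun u : Fin n → ℂ => fderiv ℝ (fun w : Fin n → ℂ => Lag n m 0 w) u) a) v = 0 ↔
        ∃ t : ℝ, v = t • fun j => Complex.I * a j)
    (e : Fin n → ℂ) (he : ∑ j, (e j * (starRingEnd ℂ) (Complex.I * a j)).re ≠ 0) :
    ∃ κ₀ > (0 : ℝ), ∃ W ∈ nhds ((a, 0) : (Fin n → ℂ) × ℝ),
      ∃ φ : ℝ → (Fin n → ℂ) × ℝ,
        ContinuousOn φ (Set.Ioo (-κ₀) κ₀) ∧ φ 0 = (a, 0) ∧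
          ∀ κ : ℝ, |κ| < κ₀ →
            φ κ ∈ W ∧ Faug n m a e κ (φ κ) = 0 ∧
              ∀ p ∈ W, Faug n m a e κ p = 0 → p = φ κ := by
  have hf := (contDiffAt_Faug (m := m) (a := a) (e := e) (k := 1) (mk_zero_mem_lagDomain ha) 0)
    |>.hasStrictFDerivAt one_ne_zero
  have hpartial : fderiv ℝ (fun q : ℝ × (Fin n → ℂ) × ℝ => Faug n m a e q.1 q.2) (0, a, 0) ∘L
      .inr ℝ ℝ _ = fderiv ℝ (Faug n m a e 0) (a, 0) :=
    (hf.hasFDerivAt.comp (a, 0) (hasFDerivAt_prodMk_right 0 (a, 0))).fderiv.symm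
  have h0 : Faug n m a e 0 (a, 0) = 0 := by simp [Faug, hcrit, Pi.zero_def]
  exact exists_unique_continuation_of_hasStrictFDerivAt hf
    (hpartial ▸ isInvertible_fderiv_Faug ha hnondeg (by rwa [rePair_apply])) h0

/-- The augmented map has a unique continuation of solutions starting from the
non-degenerate central configuration `(a, 0)`. -/
theorem augmented_map_unique_continuation
    (n : ℕ) (hn : 2 ≤ n) (m : Fin n → ℝ) (hm : ∀ j, 0 < m j)
    (a : Fin n → ℂ) (ha : Function.Injective a)
    (hcrit : gradL n m 0 a = 0)
    (hnondeg : ∀ v : Fin n → ℂ,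
      (fderiv ℝ (fun u : Fin n → ℂ => fderiv ℝ (fun w : Fin n → ℂ => Lag n m 0 w) u) a) v = 0 ↔
        ∃ t : ℝ, v = t • fun j => Complex.I * a j)
    (e : Fin n → ℂ) (he : ∑ j, (e j * (starRingEnd ℂ) (Complex.I * a j)).re ≠ 0) :
    ∃ κ₀ > (0 : ℝ), ∃ W ∈ nhds ((a, 0) : (Fin n → ℂ) × ℝ),
      ∃ φ : ℝ → (Fin n → ℂ) × ℝ,
        ContinuousOn φ (Set.Ioo (-κ₀) κ₀) ∧ φ 0 = (a, 0) ∧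
          ∀ κ : ℝ, |κ| < κ₀ →
            φ κ ∈ W ∧ Faug n m a e κ (φ κ) = 0 ∧
              ∀ p ∈ W, Faug n m a e κ p = 0 → p = φ κ :=
  augmented_map_unique_continuation_general n m a ha hcrit hnondeg e he
end

section
/- Let n ≥ 2, let ω = e^{2πi/n}, let r > 0, and set aⱼ = r·ωʲ for j = 0, …, n−1. Then for every j, Σ_{k ≠ j} (aⱼ − a_k)/|aⱼ − a_k|³ = (s₁ / r³)·aⱼ, where s₁ = Σ_{l=1}^{n−1} (1 − ωˡ)/|1 − ωˡ|³. -/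
/-! The map `z ↦ z / ‖z‖³` is multiplicative, and `aⱼ - a_k = aⱼ (1 - ω^(k-j))` since `ω` is an
`n`-th root of unity. Each summand is therefore `aⱼ / r³` times `(1 - ωˡ)/|1 - ωˡ|³` with
`l = k - j mod n`, and as `k` runs over `k ≠ j` the index `l` runs over `1, …, n-1`. -/

open Finset

lemma mul_div_norm_mul_pow {𝕜 : Type*} [RCLike 𝕜] (c u : 𝕜) (m : ℕ) :
    c * u / (‖c * u‖ : 𝕜) ^ m = c / (‖c‖ : 𝕜) ^ m * (u / (‖u‖ : 𝕜) ^ m) := by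
  rw [norm_mul, RCLike.ofReal_mul, mul_pow, mul_div_mul_comm]

lemma pow_val_add_of_pow_eq_one {M : Type*} [Monoid M] {n : ℕ} {ω : M} (hω : ω ^ n = 1)
    (j k : Fin n) : ω ^ ((j + k : Fin n) : ℕ) = ω ^ (j : ℕ) * ω ^ (k : ℕ) := by
  rw [Fin.val_add, ← pow_eq_pow_mod _ hω, pow_add]

lemma Fin.sum_univ_erase_zero_eq_sum_Ico {M : Type*} [AddCommGroup M] {n : ℕ} [NeZero n]
    (f : ℕ → M) : ∑ k ∈ univ.erase (0 : Fin n), f k = ∑ l ∈ Ico 1 n, f l := by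
  rw [sum_erase_eq_sub (mem_univ _), Fin.sum_univ_eq_sum_range (f ·),
    sum_range_eq_add_Ico _ (Nat.pos_of_neZero n), Fin.val_zero, add_sub_cancel_left]

lemma Fin.sum_univ_erase_eq_sum_Ico_sub {M : Type*} [AddCommGroup M] {n : ℕ} [NeZero n]
    (j : Fin n) (f : ℕ → M) :
    ∑ k ∈ univ.erase j, f (k - j : Fin n) = ∑ l ∈ Ico 1 n, f l := by
  rw [← Fin.sum_univ_erase_zero_eq_sum_Ico]
  exact sum_equiv (Equiv.subRight j) (by simp [sub_eq_zero]) (fun _ _ ↦ rfl)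

theorem polygon_acceleration_proportional_general
    (n : ℕ) (r : ℝ) (hr : 0 < r)
    (ω : ℂ) (hω : ω = Complex.exp (2 * Real.pi * Complex.I / n))
    (a : Fin n → ℂ) (ha : ∀ j : Fin n, a j = (r : ℂ) * ω ^ (j : ℕ))
    (s₁ : ℂ) (hs₁ : s₁ = ∑ l ∈ Finset.Ico 1 n, (1 - ω ^ l) / (‖1 - ω ^ l‖ : ℂ) ^ 3) :
    ∀ j : Fin n,
      ∑ k ∈ Finset.univ.erase j, (a j - a k) / (‖a j - a k‖ : ℂ) ^ 3 =
        (s₁ / (r : ℂ) ^ 3) * a j := by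
  intro j
  have : NeZero n := NeZero.of_pos j.pos
  have hωn : ω ^ n = 1 := hω ▸ (Complex.isPrimitiveRoot_exp n (NeZero.ne n)).pow_eq_one
  have hnorm : ‖a j‖ = r := by
    rw [ha, norm_mul, norm_pow, Complex.norm_eq_one_of_pow_eq_one hωn (NeZero.ne n), one_pow,
      mul_one, Complex.norm_real, Real.norm_of_nonneg hr.le]
  have hdiff (k : Fin n) : a j - a k = a j * (1 - ω ^ ((k - j : Fin n) : ℕ)) := by
    rw [ha, ha, ← add_sub_cancel j k, pow_val_add_of_pow_eq_one hωn, add_sub_cancel]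
    ring
  calc ∑ k ∈ univ.erase j, (a j - a k) / (‖a j - a k‖ : ℂ) ^ 3
      = ∑ k ∈ univ.erase j, a j / (‖a j‖ : ℂ) ^ 3 *
          ((1 - ω ^ ((k - j : Fin n) : ℕ)) / (‖1 - ω ^ ((k - j : Fin n) : ℕ)‖ : ℂ) ^ 3) := by
        refine sum_congr rfl fun k _ ↦ ?_
        rw [hdiff]
        exact mul_div_norm_mul_pow _ _ 3
    _ = a j / (r : ℂ) ^ 3 * s₁ := by
        rw [← mul_sum, Fin.sum_univ_erase_eq_sum_Ico_sub j
          (fun l ↦ (1 - ω ^ l) / (‖1 - ω ^ l‖ : ℂ) ^ 3), hs₁, hnorm]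
    _ = s₁ / (r : ℂ) ^ 3 * a j := by ring

/-- For the regular `n`-gon configuration `aⱼ = r ωʲ`, the Newtonian
acceleration at each vertex is proportional to the position:
`∑_{k ≠ j} (aⱼ − a_k)/|aⱼ − a_k|³ = (s₁/r³) aⱼ`. -/
theorem polygon_acceleration_proportional
    (n : ℕ) (hn : 2 ≤ n) (r : ℝ) (hr : 0 < r)
    (ω : ℂ) (hω : ω = Complex.exp (2 * Real.pi * Complex.I / n))
    (a : Fin n → ℂ) (ha : ∀ j : Fin n, a j = (r : ℂ) * ω ^ (j : ℕ))
    (s₁ : ℂ) (hs₁ : s₁ = ∑ l ∈ Finset.Ico 1 n, (1 - ω ^ l) / (‖1 - ω ^ l‖ : ℂ) ^ 3) :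
    ∀ j : Fin n,
      ∑ k ∈ Finset.univ.erase j, (a j - a k) / (‖a j - a k‖ : ℂ) ^ 3 =
        (s₁ / (r : ℂ) ^ 3) * a j :=
  polygon_acceleration_proportional_general n r hr ω hω a ha s₁ hs₁
end
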